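/- Let E be a sequential effect algebra and p an idempotent. Then the corner p ∘ E = {p ∘ a : a ∈ E} = {a ∈ E : a ≤ p}, with the restricted sum and product, zero 0, unit p, and complement a ↦ p ⊖ a, is itself a sequential effect algebra. -/
import Mathlib


universe u

/-- `EAle orth add a b` : the effect-algebra order `a ≤ b` iff `∃ c, a ⊕ c = b`. -/
def EAle {α : Type u} (orth : α → α → Prop) (add : α → α → α) (a b : α) : Prop :=
  ∃ c, orth a c ∧ add a c = b

/-- An effect algebra: partial sum `add` (defined when `orth` holds), zero, complement. -/
structure EffectAlgebra (α : Type u) where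
  orth : α → α → Prop
  add : α → α → α
  zero : α
  compl : α → α
  orth_comm : ∀ a b, orth a b → orth b a
  add_comm' : ∀ a b, orth a b → add a b = add b a
  orth_zero : ∀ a, orth a zero
  add_zero' : ∀ a, add a zero = a
  orth_assoc₁ : ∀ a b c, orth a b → orth (add a b) c → orth b c
  orth_assoc₂ : ∀ a b c, orth a b → orth (add a b) c → orth a (add b c)
  add_assoc' : ∀ a b c, orth a b → orth (add a b) c → add (add a b) c = add a (add b c)
  orth_compl : ∀ a, orth a (compl a)
  add_compl : ∀ a, add a (compl a) = compl zero
  compl_unique : ∀ a b, orth a b → add a b = compl zero → b = compl a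
  orth_one : ∀ a, orth a (compl zero) → a = zero

namespace EffectAlgebra
variable {α : Type u}
/-- The effect-algebra order. -/
def le (E : EffectAlgebra α) : α → α → Prop := EAle E.orth E.add
/-- The unit `1 := 0⊥`. -/
def one (E : EffectAlgebra α) : α := E.compl E.zero
end EffectAlgebra

/-- A sequential effect algebra: an effect algebra with a total product `seq`
satisfying S1–S5. -/
structure SEA (α : Type u) extends EffectAlgebra α where
  seq : α → α → α
  seq_orth : ∀ a b c, orth b c → orth (seq a b) (seq a c)                                -- S1
  seq_add : ∀ a b c, orth b c → seq a (add b c) = add (seq a b) (seq a c)                -- S1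
  one_seq : ∀ a, seq (compl zero) a = a                                                  -- S2
  seq_zero_symm : ∀ a b, seq a b = zero → seq b a = zero                                 -- S3
  comm_compl : ∀ a b, seq a b = seq b a → seq a (compl b) = seq (compl b) a              -- S4
  comm_assoc : ∀ a b c, seq a b = seq b a → seq a (seq b c) = seq (seq a b) c            -- S4
  comm_seq : ∀ a b c, seq c a = seq a c → seq c b = seq b c →
    seq c (seq a b) = seq (seq a b) c                                                    -- S5
  comm_add : ∀ a b c, seq c a = seq a c → seq c b = seq b c → orth a b →
    seq c (add a b) = seq (add a b) c                                                    -- S5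

namespace SEAcorner
variable {α : Type u}

lemma le_ex (E : SEA α) {a b : α} (h : E.le a b) :
    ∃ c, E.orth a c ∧ E.add a c = b := h

lemma le_intro (E : SEA α) {a b c : α} (h1 : E.orth a c) (h2 : E.add a c = b) :
    E.le a b := ⟨c, h1, h2⟩

lemma add_sub (E : SEA α) (a b : α) (h : E.orth a b) :
    E.add a (E.compl (E.add a b)) = E.compl b := by
  have hba := E.orth_comm a b h
  have hcomm := E.add_comm' a b h
  have h1 := E.orth_compl (E.add a b)
  have h2 := E.add_compl (E.add a b)
  rw [hcomm] at h1 h2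
  have h3 := E.orth_assoc₁ b a _ hba h1
  have h4 := E.orth_assoc₂ b a _ hba h1
  have h5 := E.add_assoc' b a _ hba h1
  have h6 : E.add b (E.add a (E.compl (E.add b a))) = E.compl E.zero := h5.symm.trans h2
  have h7 := E.compl_unique b _ h4 h6
  rw [hcomm]
  exact h7

lemma compl_compl (E : SEA α) (a : α) : E.compl (E.compl a) = a := by
  have h1 := E.orth_compl a
  have h3 := E.orth_comm _ _ h1
  have h4 : E.add (E.compl a) a = E.compl E.zero :=
    (E.add_comm' _ _ h3).trans (E.add_compl a)
  exact (E.compl_unique _ _ h3 h4).symm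

lemma cancel (E : SEA α) {a b c : α} (h1 : E.orth a b) (h2 : E.orth a c)
    (h3 : E.add a b = E.add a c) : b = c := by
  have e1 := add_sub E a b h1
  have e2 := add_sub E a c h2
  rw [h3] at e1
  have e3 : E.compl b = E.compl c := e1.symm.trans e2
  have := congrArg E.compl e3
  rwa [compl_compl, compl_compl] at this

lemma zero_add (E : SEA α) (a : α) : E.add E.zero a = a := by
  rw [E.add_comm' _ _ (E.orth_comm _ _ (E.orth_zero a)), E.add_zero']

lemma le_refl (E : SEA α) (a : α) : E.le a a :=
  le_intro E (E.orth_zero a) (E.add_zero' a)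

lemma le_trans (E : SEA α) {a b c : α} (h1 : E.le a b) (h2 : E.le b c) : E.le a c := by
  obtain ⟨x, hx, rfl⟩ := le_ex E h1
  obtain ⟨y, hy, rfl⟩ := le_ex E h2
  exact le_intro E (E.orth_assoc₂ a x y hx hy) (E.add_assoc' a x y hx hy).symm

lemma le_zero (E : SEA α) {a : α} (h : E.le a E.zero) : a = E.zero := by
  obtain ⟨c, hc, h0⟩ := le_ex E h
  have h1 : E.orth (E.add a c) (E.compl E.zero) := by rw [h0]; exact E.orth_compl E.zero
  have h2 := E.orth_assoc₁ a c _ hc h1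
  have h3 := E.orth_one c h2
  rw [h3, E.add_zero'] at h0
  exact h0

lemma le_compl (E : SEA α) {a b : α} (h : E.orth a b) : E.le b (E.compl a) := by
  have hba := E.orth_comm a b h
  have e := add_sub E b a hba
  rw [E.add_comm' b a hba] at e
  exact le_intro E (E.orth_assoc₁ a b _ h (E.orth_compl (E.add a b))) e

lemma seq_zero (E : SEA α) (a : α) : E.seq a E.zero = E.zero := by
  have h00 : E.orth E.zero E.zero := E.orth_zero _
  have h1 := E.seq_add a E.zero E.zero h00
  rw [E.add_zero' E.zero] at h1
  have h2 := E.seq_orth a _ _ h00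
  have h3 : E.add (E.seq a E.zero) E.zero = E.add (E.seq a E.zero) (E.seq a E.zero) := by
    rw [E.add_zero']; exact h1
  exact (cancel E (E.orth_zero _) h2 h3).symm

lemma zero_seq (E : SEA α) (a : α) : E.seq E.zero a = E.zero :=
  E.seq_zero_symm a E.zero (seq_zero E a)

lemma seq_one (E : SEA α) (a : α) : E.seq a (E.compl E.zero) = a := by
  have h := E.comm_compl a E.zero (by rw [seq_zero, zero_seq])
  rw [h]
  exact E.one_seq a

lemma le_one (E : SEA α) (a : α) : E.le a (E.compl E.zero) :=
  le_intro E (E.orth_compl a) (E.add_compl a)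

lemma seq_mono (E : SEA α) (a : α) {b c : α} (h : E.le b c) :
    E.le (E.seq a b) (E.seq a c) := by
  obtain ⟨d, hd, rfl⟩ := le_ex E h
  exact le_intro E (E.seq_orth a b d hd) (E.seq_add a b d hd).symm

section Idem
variable (E : SEA α) (p : α) (hp : E.seq p p = p)
include hp

lemma seq_p_compl : E.seq p (E.compl p) = E.zero := by
  have h1 := E.seq_add p p (E.compl p) (E.orth_compl p)
  rw [E.add_compl p, seq_one, hp] at h1
  have h2 : E.orth p (E.seq p (E.compl p)) := by
    have := E.seq_orth p p (E.compl p) (E.orth_compl p)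
    rwa [hp] at this
  exact cancel E h2 (E.orth_zero p) (by rw [E.add_zero']; exact h1.symm)

lemma compl_p_seq : E.seq (E.compl p) p = E.zero :=
  E.seq_zero_symm _ _ (seq_p_compl E p hp)

lemma idem_seq_of_le {a : α} (h : E.le a p) : E.seq p a = a ∧ E.seq a p = a := by
  have hq' := compl_p_seq E p hp
  have h1 : E.le (E.seq (E.compl p) a) E.zero := by
    have := seq_mono E (E.compl p) h
    rwa [hq'] at this
  have h2 := le_zero E h1
  have h3 := E.seq_zero_symm _ _ h2
  have h4 := E.seq_add a p (E.compl p) (E.orth_compl p)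
  rw [E.add_compl, seq_one, h3, E.add_zero'] at h4
  have h5 := E.comm_compl a (E.compl p) (h3.trans h2.symm)
  rw [compl_compl] at h5
  exact ⟨h5.symm.trans h4.symm, h4.symm⟩

lemma le_p_of_seq (b : α) : E.le (E.seq p b) p := by
  have h := seq_mono E p (le_one E b)
  rwa [seq_one] at h

lemma compl_p_idem : E.seq (E.compl p) (E.compl p) = E.compl p := by
  have h1 := E.seq_add (E.compl p) p (E.compl p) (E.orth_compl p)
  rw [E.add_compl, seq_one, compl_p_seq E p hp] at h1
  have horth : E.orth E.zero (E.seq (E.compl p) (E.compl p)) :=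
    E.orth_comm _ _ (E.orth_zero _)
  rw [E.add_comm' _ _ horth, E.add_zero'] at h1
  exact h1.symm

lemma corner_orth_one {a : α} (ha : E.le a p) (h : E.orth a p) : a = E.zero := by
  have hle : E.le a (E.compl p) := le_compl E (E.orth_comm a p h)
  have h1 := (idem_seq_of_le E (E.compl p) (compl_p_idem E p hp) hle).1
  have h2 := (idem_seq_of_le E p hp ha).1
  have hcomm : E.seq p (E.compl p) = E.seq (E.compl p) p := by
    rw [seq_p_compl E p hp, compl_p_seq E p hp]
  have h3 := E.comm_assoc p (E.compl p) a hcomm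
  rw [h1, h2, seq_p_compl E p hp] at h3
  rw [h3]
  exact zero_seq E a

lemma add_closed {a b : α} (ha : E.le a p) (hb : E.le b p) (hab : E.orth a b) :
    E.le (E.add a b) p := by
  have h1 := (idem_seq_of_le E p hp ha).1
  have h2 := (idem_seq_of_le E p hp hb).1
  have h3 := E.seq_add p a b hab
  rw [h1, h2] at h3
  have := le_p_of_seq E p hp (E.add a b)
  rwa [h3] at this

lemma seq_closed {a b : α} (ha : E.le a p) (hb : E.le b p) :
    E.le (E.seq a b) p := by
  have h := seq_mono E a (le_one E b)
  rw [seq_one] at h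
  exact le_trans E h ha

end Idem

section Corner
variable (E : SEA α) (p : α) (hp : E.seq p p = p)

lemma zero_le : E.le E.zero p :=
  le_intro E (E.orth_comm p E.zero (E.orth_zero p)) (zero_add E p)

noncomputable def csub (x : {a : α // E.le a p}) : {a : α // E.le a p} :=
  ⟨(le_ex E x.2).choose, x.1, E.orth_comm _ _ (le_ex E x.2).choose_spec.1,
    (E.add_comm' _ _ (E.orth_comm _ _ (le_ex E x.2).choose_spec.1)).trans
      (le_ex E x.2).choose_spec.2⟩

lemma csub_spec (x : {a : α // E.le a p}) :
    E.orth x.1 (csub E p x).1 ∧ E.add x.1 (csub E p x).1 = p :=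
  (le_ex E x.2).choose_spec

lemma csub_unique (x : {a : α // E.le a p}) (c : α) (h1 : E.orth x.1 c)
    (h2 : E.add x.1 c = p) : c = (csub E p x).1 :=
  cancel E h1 (csub_spec E p x).1 (h2.trans (csub_spec E p x).2.symm)

lemma csub_val_zero (z : {a : α // E.le a p}) (hz : z.1 = E.zero) :
    (csub E p z).1 = p := by
  have h := csub_spec E p z
  rw [hz] at h
  exact (zero_add E _).symm.trans h.2

include hp

lemma csub_val (x : {a : α // E.le a p}) :
    (csub E p x).1 = E.seq p (E.compl x.1) := by
  symm
  apply csub_unique E p x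
  · have h := E.seq_orth p x.1 (E.compl x.1) (E.orth_compl x.1)
    rwa [(idem_seq_of_le E p hp x.2).1] at h
  · have h := E.seq_add p x.1 (E.compl x.1) (E.orth_compl x.1)
    rw [E.add_compl, seq_one, (idem_seq_of_le E p hp x.2).1] at h
    exact h.symm

open Classical in
noncomputable def cadd (x y : {a : α // E.le a p}) : {a : α // E.le a p} :=
  if h : E.orth x.1 y.1 then ⟨E.add x.1 y.1, add_closed E p hp x.2 y.2 h⟩ else x

open Classical in
lemma cadd_val (x y : {a : α // E.le a p}) (h : E.orth x.1 y.1) :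
    (cadd E p hp x y).1 = E.add x.1 y.1 := by
  unfold cadd
  rw [dif_pos h]

noncomputable def corner : SEA {a : α // E.le a p} where
  orth x y := E.orth x.1 y.1
  add := cadd E p hp
  zero := ⟨E.zero, zero_le E p⟩
  compl := csub E p
  seq x y := ⟨E.seq x.1 y.1, seq_closed E p hp x.2 y.2⟩
  orth_comm a b h := E.orth_comm _ _ h
  add_comm' a b h := Subtype.ext (by
    rw [cadd_val E p hp a b h, cadd_val E p hp b a (E.orth_comm _ _ h), E.add_comm' _ _ h])
  orth_zero a := E.orth_zero a.1
  add_zero' a := Subtype.ext (by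
    rw [cadd_val E p hp _ _ (E.orth_zero a.1)]; exact E.add_zero' a.1)
  orth_assoc₁ a b c h1 h2 := by
    have h2' : E.orth (cadd E p hp a b).1 c.1 := h2
    rw [cadd_val E p hp a b h1] at h2'
    exact E.orth_assoc₁ a.1 b.1 c.1 h1 h2'
  orth_assoc₂ a b c h1 h2 := by
    have h2' : E.orth (cadd E p hp a b).1 c.1 := h2
    rw [cadd_val E p hp a b h1] at h2'
    have hbc := E.orth_assoc₁ _ _ _ h1 h2'
    show E.orth a.1 (cadd E p hp b c).1
    rw [cadd_val E p hp b c hbc]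
    exact E.orth_assoc₂ _ _ _ h1 h2'
  add_assoc' a b c h1 h2 := by
    apply Subtype.ext
    have h2' : E.orth (cadd E p hp a b).1 c.1 := h2
    rw [cadd_val E p hp a b h1] at h2'
    have hbc := E.orth_assoc₁ _ _ _ h1 h2'
    have habc := E.orth_assoc₂ _ _ _ h1 h2'
    have h2'' : E.orth (cadd E p hp a b).1 c.1 := h2
    rw [cadd_val E p hp _ c h2'', cadd_val E p hp a b h1,
        cadd_val E p hp a (cadd E p hp b c)
          (by rw [cadd_val E p hp b c hbc]; exact habc),
        cadd_val E p hp b c hbc]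
    exact E.add_assoc' _ _ _ h1 h2'
  orth_compl a := (csub_spec E p a).1
  add_compl a := by
    apply Subtype.ext
    rw [cadd_val E p hp a _ (csub_spec E p a).1, (csub_spec E p a).2]
    exact (csub_val_zero E p _ rfl).symm
  compl_unique a b h1 h2 := by
    apply Subtype.ext
    apply csub_unique E p a b.1 h1
    have h3 : (cadd E p hp a b).1 = (csub E p ⟨E.zero, zero_le E p⟩).1 :=
      congrArg Subtype.val h2
    rw [cadd_val E p hp a b h1] at h3
    rw [h3]
    exact csub_val_zero E p _ rfl
  orth_one a h := by
    apply Subtype.ext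
    have h' : E.orth a.1 (csub E p ⟨E.zero, zero_le E p⟩).1 := h
    rw [csub_val_zero E p _ rfl] at h'
    exact corner_orth_one E p hp a.2 h'
  seq_orth a b c h := E.seq_orth a.1 b.1 c.1 h
  seq_add a b c h := by
    apply Subtype.ext
    show E.seq a.1 (cadd E p hp b c).1 = (cadd E p hp _ _).1
    rw [cadd_val E p hp b c h, cadd_val E p hp _ _ (E.seq_orth a.1 b.1 c.1 h)]
    exact E.seq_add a.1 b.1 c.1 h
  one_seq a := by
    apply Subtype.ext
    show E.seq (csub E p ⟨E.zero, zero_le E p⟩).1 a.1 = a.1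
    rw [csub_val_zero E p _ rfl]
    exact (idem_seq_of_le E p hp a.2).1
  seq_zero_symm a b h := by
    apply Subtype.ext
    exact E.seq_zero_symm a.1 b.1 (congrArg Subtype.val h)
  comm_compl a b h := by
    apply Subtype.ext
    have hv : E.seq a.1 b.1 = E.seq b.1 a.1 := congrArg Subtype.val h
    have h1 := idem_seq_of_le E p hp a.2
    have h2 := E.comm_compl a.1 b.1 hv
    show E.seq a.1 (csub E p b).1 = E.seq (csub E p b).1 a.1
    rw [csub_val E p hp b]
    exact E.comm_seq p (E.compl b.1) a.1 (h1.2.trans h1.1.symm) h2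
  comm_assoc a b c h :=
    Subtype.ext (E.comm_assoc a.1 b.1 c.1 (congrArg Subtype.val h))
  comm_seq a b c h1 h2 :=
    Subtype.ext (E.comm_seq a.1 b.1 c.1 (congrArg Subtype.val h1) (congrArg Subtype.val h2))
  comm_add a b c h1 h2 h3 := by
    apply Subtype.ext
    show E.seq c.1 (cadd E p hp a b).1 = E.seq (cadd E p hp a b).1 c.1
    rw [cadd_val E p hp a b h3]
    exact E.comm_add a.1 b.1 c.1 (congrArg Subtype.val h1) (congrArg Subtype.val h2) h3

end Corner
end SEAcorner

open SEAcorner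

/-- The corner `p ∘ E = {a : a ≤ p}` of a SEA by an idempotent `p` is itself a
SEA, with the restricted sum and product, zero `0`, unit `p` and complement
`a ↦ p ⊖ a`. -/
theorem sea_corner {α : Type u} (E : SEA α) (p : α) (hp : E.seq p p = p) :
    (∀ a : α, E.le a p ↔ ∃ b, E.seq p b = a) ∧
    ∃ F : SEA {a : α // E.le a p},
      (∀ x y, F.orth x y ↔ E.orth x.val y.val) ∧
      (∀ x y, F.orth x y → (F.add x y).val = E.add x.val y.val) ∧
      F.zero.val = E.zero ∧
      (∀ x, E.orth x.val (F.compl x).val ∧ E.add x.val (F.compl x).val = p) ∧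
      (∀ x y, (F.seq x y).val = E.seq x.val y.val) := by
  constructor
  · intro a
    constructor
    · intro h
      exact ⟨a, (idem_seq_of_le E p hp h).1⟩
    · rintro ⟨b, rfl⟩
      exact le_p_of_seq E p hp b
  · exact ⟨corner E p hp, fun x y => Iff.rfl,
      fun x y h => cadd_val E p hp x y h, rfl,
      fun x => csub_spec E p x, fun x y => rfl⟩
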